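/- arXiv:1410.2144 — 2 statements merged into one kernel-verified Lean document; each statement's English description precedes it below -/
import Mathlib

section
/- Let A be a finite alphabet, D ⊆ ℤ^d finite, and f : A^D → A permutive in variable x_j where j is an extreme point of D in the sense that j maximizes each coordinate: j_i = max { p_i : p ∈ D } for all i, and j is the unique such maximizer. Then the composed local rule of F², which is defined on D + D = {p + q : p, q ∈ D}, is permutive in the variable x_{2j}. -/
open Pointwise

/-- Permutivity of a local rule in the variable `j`. -/
def Permutive {A : Type*} {D : Type*} [DecidableEq D] (f : (D → A) → A) (j : D) : Prop :=
  ∀ c : D → A, Function.Bijective (fun a : A => f (Function.update c j a))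

/-- The local rule of `F²`, defined on the neighborhood `D + D`. -/
def squareRule {A : Type*} {d : ℕ} (D : Finset (Fin d → ℤ)) (f : (↥D → A) → A) :
    (↥(D + D) → A) → A :=
  fun y => f (fun p : ↥D => f (fun q : ↥D =>
    y ⟨(p : Fin d → ℤ) + (q : Fin d → ℤ), Finset.add_mem_add p.2 q.2⟩))

theorem stmt9 {A : Type*} [Fintype A] {d : ℕ} (D : Finset (Fin d → ℤ))
    (f : (↥D → A) → A) (j : Fin d → ℤ) (hj : j ∈ D)
    (hperm : Permutive f ⟨j, hj⟩)
    (hmax : ∀ p ∈ D, ∀ i : Fin d, p i ≤ j i)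
    (huniq : ∀ p ∈ D, ∀ q ∈ D, p + q = j + j → p = j ∧ q = j) :
    Permutive (squareRule D f) ⟨j + j, Finset.add_mem_add hj hj⟩ := by
  intro c
  set J : ↥(D + D) := ⟨j + j, Finset.add_mem_add hj hj⟩ with hJ
  set base : ↥D → A := fun p : ↥D => f (fun q : ↥D =>
    c ⟨(p : Fin d → ℤ) + (q : Fin d → ℤ), Finset.add_mem_add p.2 q.2⟩) with hbase
  set inner : ↥D → A := fun q : ↥D =>
    c ⟨j + (q : Fin d → ℤ), Finset.add_mem_add hj q.2⟩ with hinner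
  have key : ∀ a : A, squareRule D f (Function.update c J a)
      = f (Function.update base ⟨j, hj⟩ (f (Function.update inner ⟨j, hj⟩ a))) := by
    intro a
    unfold squareRule
    congr 1
    funext p
    by_cases hp : p = ⟨j, hj⟩
    · subst hp
      rw [Function.update_self]
      congr 1
      funext q
      by_cases hq : q = ⟨j, hj⟩
      · subst hq
        rw [Function.update_self]
        exact (Function.update_self _ a inner).symm
      · rw [Function.update_of_ne hq, hinner, Function.update_of_ne]
        intro h
        apply hq
        have : j + (q : Fin d → ℤ) = j + j := congrArg Subtype.val h
        exact Subtype.ext (add_left_cancel this)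
    · rw [Function.update_of_ne hp, hbase]
      congr 1
      funext q
      rw [Function.update_of_ne]
      intro h
      apply hp
      have : (p : Fin d → ℤ) + (q : Fin d → ℤ) = j + j := congrArg Subtype.val h
      exact Subtype.ext (huniq p p.2 q q.2 this).1
  simp only [key]
  exact (hperm base).comp (hperm inner)
end

section
/- Let A be a finite alphabet, D ⊆ ℤ a finite set of integers with maximum r > 0, and f : A^D → A permutive in the variable x_r (rightmost permutive). Let F be the induced one-dimensional cellular automaton and μ the uniform Bernoulli measure on A^ℤ. Then for any two cylinders C₀, C₁ on finite coordinate sets S₀, S₁ ⊆ ℤ, there exists n₀ such that for all n ≥ n₀, μ(C₀ ∩ F⁻ⁿ C₁) = μ(C₀) μ(C₁). -/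
open MeasureTheory

/-- The one-dimensional cellular automaton on `A^ℤ` induced by a local rule `f` on the
finite neighborhood `D ⊆ ℤ`. -/
def cellAut1 {A : Type*} (D : Finset ℤ) (f : (↥D → A) → A) : (ℤ → A) → (ℤ → A) :=
  fun x i => f (fun k : ↥D => x (i + (k : ℤ)))

/-- `μ` is the uniform Bernoulli (product) measure on `A^ι`: a probability measure giving
each cylinder on a finite coordinate set `S` the measure `(1/|A|)^|S|`. -/
def IsUniformBernoulli {A : Type*} [Fintype A] [MeasurableSpace A] {ι : Type*}
    (μ : Measure (ι → A)) : Prop :=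
  IsProbabilityMeasure μ ∧
    ∀ (S : Finset ι) (c : ↥S → A),
      μ {x | ∀ s : ↥S, x (s : ι) = c s} = ((Fintype.card A : ENNReal))⁻¹ ^ S.card

section aux
variable {A : Type*} {D : Finset ℤ} {f : (↥D → A) → A} {l r : ℤ}

lemma cellAut1_loc (hl : ∀ k ∈ D, l ≤ k) (hrr : ∀ k ∈ D, k ≤ r) (n : ℕ) :
    ∀ (i : ℤ) (x y : ℤ → A),
      (∀ j : ℤ, i + (n : ℤ) * l ≤ j → j ≤ i + (n : ℤ) * r → x j = y j) →
      (cellAut1 D f)^[n] x i = (cellAut1 D f)^[n] y i := by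
  induction n with
  | zero =>
    intro i x y h
    simpa using h i (by simp) (by simp)
  | succ n ih =>
    intro i x y h
    rw [Function.iterate_succ_apply', Function.iterate_succ_apply']
    simp only [cellAut1]
    congr 1
    funext k
    refine ih (i + (k : ℤ)) x y (fun j h1 h2 => h j ?_ ?_)
    · have hk := hl k k.2
      push_cast at h1 ⊢
      nlinarith
    · have hk := hrr k k.2
      push_cast at h2 ⊢
      nlinarith

lemma cellAut1_perm (hl : ∀ k ∈ D, l ≤ k) (hrr : ∀ k ∈ D, k ≤ r)
    (hrD : r ∈ D) (hf : Permutive f ⟨r, hrD⟩) (n : ℕ) :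
    ∀ (i : ℤ) (x : ℤ → A) (a b : A),
      (cellAut1 D f)^[n] (Function.update x (i + (n : ℤ) * r) a) i =
        (cellAut1 D f)^[n] (Function.update x (i + (n : ℤ) * r) b) i → a = b := by
  induction n with
  | zero =>
    intro i x a b h
    simpa using h
  | succ n ih =>
    intro i x a b h
    rw [Function.iterate_succ_apply', Function.iterate_succ_apply'] at h
    simp only [cellAut1] at h
    have key : ∀ c : A,
        (fun k : ↥D => (cellAut1 D f)^[n]
            (Function.update x (i + ((n : ℕ) + 1 : ℤ) * r) c) (i + (k : ℤ)))
          = Function.update (fun k : ↥D => (cellAut1 D f)^[n] x (i + (k : ℤ)))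
              ⟨r, hrD⟩
              ((cellAut1 D f)^[n]
                (Function.update x (i + ((n : ℕ) + 1 : ℤ) * r) c) (i + r)) := by
      intro c
      funext k
      by_cases hk : k = (⟨r, hrD⟩ : ↥D)
      · subst hk; simp
      · rw [Function.update_of_ne hk]
        refine cellAut1_loc hl hrr n _ _ _ (fun j h1 h2 => ?_)
        have hkr : (k : ℤ) < r :=
          lt_of_le_of_ne (hrr k k.2) (fun hh => hk (Subtype.ext hh))
        have : j < i + ((n : ℕ) + 1 : ℤ) * r := by
          have : ((n : ℕ) + 1 : ℤ) * r = (n : ℤ) * r + r := by ring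
          rw [this]; linarith
        rw [Function.update_of_ne (ne_of_lt this)]
    push_cast at h
    rw [key a, key b] at h
    have h2 := (hf _).injective h
    have ht : i + ((n : ℕ) + 1 : ℤ) * r = (i + r) + (n : ℤ) * r := by ring
    rw [ht] at h2
    exact ih (i + r) x a b h2

lemma cellAut1_top (hl : ∀ k ∈ D, l ≤ k) (hrr : ∀ k ∈ D, k ≤ r)
    (hrD : r ∈ D) (hf : Permutive f ⟨r, hrD⟩) (n : ℕ) (i : ℤ) (x y : ℤ → A)
    (h : ∀ j : ℤ, i + (n : ℤ) * l ≤ j → j < i + (n : ℤ) * r → x j = y j)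
    (he : (cellAut1 D f)^[n] x i = (cellAut1 D f)^[n] y i) :
    x (i + (n : ℤ) * r) = y (i + (n : ℤ) * r) := by
  have h1 : (cellAut1 D f)^[n] x i =
      (cellAut1 D f)^[n] (Function.update y (i + (n : ℤ) * r) (x (i + (n : ℤ) * r))) i := by
    refine cellAut1_loc hl hrr n i x _ (fun j hj1 hj2 => ?_)
    rcases eq_or_lt_of_le hj2 with h' | h'
    · subst h'; simp
    · rw [Function.update_of_ne (ne_of_lt h')]
      exact h j hj1 h'
  have h2 : (cellAut1 D f)^[n]
      (Function.update y (i + (n : ℤ) * r) (x (i + (n : ℤ) * r))) i =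
      (cellAut1 D f)^[n]
      (Function.update y (i + (n : ℤ) * r) (y (i + (n : ℤ) * r))) i := by
    rw [Function.update_eq_self, ← h1, he]
  exact cellAut1_perm hl hrr hrD hf n i y _ _ h2

end aux

theorem stmt18 {A : Type*} [Fintype A] [Nonempty A] [MeasurableSpace A]
    [DiscreteMeasurableSpace A]
    (μ : Measure (ℤ → A)) (hμ : IsUniformBernoulli μ)
    (D : Finset ℤ) (r : ℤ) (hrD : r ∈ D) (hmax : ∀ p ∈ D, p ≤ r) (hr : 0 < r)
    (f : (↥D → A) → A) (hf : Permutive f ⟨r, hrD⟩)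
    (S₀ S₁ : Finset ℤ) (c₀ : ↥S₀ → A) (c₁ : ↥S₁ → A) :
    ∃ n₀ : ℕ, ∀ n ≥ n₀,
      μ ({x | ∀ s : ↥S₀, x (s : ℤ) = c₀ s} ∩
          (cellAut1 D f)^[n] ⁻¹' {x | ∀ s : ↥S₁, x (s : ℤ) = c₁ s}) =
        μ {x | ∀ s : ↥S₀, x (s : ℤ) = c₀ s} * μ {x | ∀ s : ↥S₁, x (s : ℤ) = c₁ s} := by
  classical
  obtain ⟨hprob, hber⟩ := hμ
  have hDne : D.Nonempty := ⟨r, hrD⟩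
  set l := D.min' hDne with hldef
  have hl : ∀ k ∈ D, l ≤ k := fun k hk => D.min'_le k hk
  have hlr : l ≤ r := hl r hrD
  refine ⟨1 + (S₁ ×ˢ S₀).sup (fun p => (p.2 - p.1).toNat), fun n hn => ?_⟩
  have hr1 : (1 : ℤ) ≤ r := hr
  -- the crucial "time is large" fact
  have hT0 : ∀ s ∈ S₁, ∀ t ∈ S₀, s + (n : ℤ) * r ≠ t := by
    intro s hs t ht heq
    have hsup : (t - s).toNat ≤ (S₁ ×ˢ S₀).sup (fun p => (p.2 - p.1).toNat) :=
      Finset.le_sup (f := fun p : ℤ × ℤ => (p.2 - p.1).toNat) (b := (s, t))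
        (Finset.mem_product.mpr ⟨hs, ht⟩)
    have hnn : (t - s).toNat < n := by omega
    have h1 : ((t - s).toNat : ℤ) < (n : ℤ) := by exact_mod_cast hnn
    have h2 : (n : ℤ) ≤ (n : ℤ) * r := le_mul_of_one_le_right (by positivity) hr1
    have h4 := Int.self_le_toNat (t - s)
    have h5 : t - s = (n : ℤ) * r := by linarith
    linarith
  -- notation
  set T : Finset ℤ := S₁.image (fun s => s + (n : ℤ) * r) with hTdef
  have hnlr : (n : ℤ) * l ≤ (n : ℤ) * r :=
    mul_le_mul_of_nonneg_left hlr (by positivity)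
  set W : Finset ℤ :=
    S₀ ∪ S₁.biUnion (fun s => Finset.Icc (s + (n : ℤ) * l) (s + (n : ℤ) * r)) with hWdef
  have hS₀W : ∀ t ∈ S₀, t ∈ W := fun t ht => Finset.mem_union_left _ ht
  have hwinW : ∀ s ∈ S₁, ∀ j : ℤ, s + (n : ℤ) * l ≤ j → j ≤ s + (n : ℤ) * r → j ∈ W := by
    intro s hs j h1 h2
    exact Finset.mem_union_right _
      (Finset.mem_biUnion.mpr ⟨s, hs, Finset.mem_Icc.mpr ⟨h1, h2⟩⟩)
  have hTW : ∀ s ∈ S₁, s + (n : ℤ) * r ∈ W := fun s hs =>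
    hwinW s hs _ (by linarith) le_rfl
  have hTmem : ∀ j : ℤ, j ∈ T ↔ j - (n : ℤ) * r ∈ S₁ := by
    intro j
    simp only [hTdef, Finset.mem_image]
    constructor
    · rintro ⟨s, hs, rfl⟩; simpa using hs
    · intro hj; exact ⟨j - (n : ℤ) * r, hj, by ring⟩
  have hTS₀ : ∀ j ∈ S₀, j ∉ T := by
    intro j hj hjT
    obtain ⟨s, hs, hsj⟩ := Finset.mem_image.mp hjT
    exact hT0 s hs j hj hsj
  -- patching a background with values on T (reindexed by S₁)
  set patch : (ℤ → A) → (↥S₁ → A) → (ℤ → A) :=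
    fun y u j => if h : j - (n : ℤ) * r ∈ S₁ then u ⟨j - (n : ℤ) * r, h⟩ else y j
    with hpatch
  have hpatchT : ∀ (y : ℤ → A) (u : ↥S₁ → A) (s : ↥S₁),
      patch y u ((s : ℤ) + (n : ℤ) * r) = u s := by
    intro y u s
    have h : (s : ℤ) + (n : ℤ) * r - (n : ℤ) * r ∈ S₁ := by simpa using s.2
    simp only [hpatch]
    rw [dif_pos h]
    congr 1
    exact Subtype.ext (by ring)
  have hpatchN : ∀ (y : ℤ → A) (u : ↥S₁ → A) (j : ℤ), j - (n : ℤ) * r ∉ S₁ →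
      patch y u j = y j := by
    intro y u j hj
    simp only [hpatch]
    rw [dif_neg hj]
  set Ψ : (ℤ → A) → (↥S₁ → A) → (↥S₁ → A) :=
    fun y u s => (cellAut1 D f)^[n] (patch y u) (s : ℤ) with hΨdef
  have hΨinj : ∀ y, Function.Injective (Ψ y) := by
    intro y u v huv
    by_contra hne
    have hBne : (Finset.univ.filter (fun s : ↥S₁ => u s ≠ v s)).Nonempty := by
      rw [Finset.filter_nonempty_iff]
      obtain ⟨s, hs⟩ := Function.ne_iff.mp hne
      exact ⟨s, Finset.mem_univ s, hs⟩
    set s₀ := (Finset.univ.filter (fun s : ↥S₁ => u s ≠ v s)).min' hBne with hs₀def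
    have hs₀mem := (Finset.univ.filter (fun s : ↥S₁ => u s ≠ v s)).min'_mem hBne
    have hs₀ne : u s₀ ≠ v s₀ := (Finset.mem_filter.mp hs₀mem).2
    apply hs₀ne
    have htop := cellAut1_top hl hmax hrD hf n (s₀ : ℤ) (patch y u) (patch y v)
      ?_ ?_
    · rw [hpatchT y u s₀, hpatchT y v s₀] at htop
      exact htop
    · intro j h1 h2
      by_cases hj : j - (n : ℤ) * r ∈ S₁
      · have hlt : ((⟨j - (n : ℤ) * r, hj⟩ : ↥S₁) : ℤ) < (s₀ : ℤ) := by
          simp only []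
          linarith
        have heqj : u ⟨j - (n : ℤ) * r, hj⟩ = v ⟨j - (n : ℤ) * r, hj⟩ := by
          by_contra hc
          have hmem : (⟨j - (n : ℤ) * r, hj⟩ : ↥S₁) ∈
              Finset.univ.filter (fun s : ↥S₁ => u s ≠ v s) :=
            Finset.mem_filter.mpr ⟨Finset.mem_univ _, hc⟩
          have := Finset.min'_le _ _ hmem
          rw [← hs₀def] at this
          exact absurd hlt (not_lt.mpr this)
        simp only [hpatch]
        rw [dif_pos hj, dif_pos hj, heqj]
      · rw [hpatchN y u j hj, hpatchN y v j hj]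
    · exact congrFun huv s₀
  have hΨbij : ∀ y, Function.Bijective (Ψ y) :=
    fun y => Finite.injective_iff_bijective.mp (hΨinj y)
  -- extension of a pattern on W to a full configuration
  set extp : (↥W → A) → (ℤ → A) :=
    fun p j => if h : j ∈ W then p ⟨j, h⟩ else Classical.arbitrary A with hextp
  set Good : (↥W → A) → Prop :=
    fun p => (∀ s : ↥S₀, p ⟨(s : ℤ), hS₀W s s.2⟩ = c₀ s) ∧
      (∀ s : ↥S₁, (cellAut1 D f)^[n] (extp p) (s : ℤ) = c₁ s) with hGood
  set cyl : (↥W → A) → Set (ℤ → A) := fun p => {x | ∀ j : ↥W, x (j : ℤ) = p j}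
    with hcyldef
  have hlocW : ∀ (p : ↥W → A) (x : ℤ → A), (∀ j (hj : j ∈ W), x j = p ⟨j, hj⟩) →
      ∀ s : ↥S₁, (cellAut1 D f)^[n] x (s : ℤ) = (cellAut1 D f)^[n] (extp p) (s : ℤ) := by
    intro p x hx s
    refine cellAut1_loc hl hmax n _ _ _ (fun j h1 h2 => ?_)
    have hjW : j ∈ W := hwinW s s.2 j h1 h2
    rw [hx j hjW]
    simp only [hextp]
    rw [dif_pos hjW]
  have hmeas : ∀ p : ↥W → A, MeasurableSet (cyl p) := by
    intro p
    have : cyl p = ⋂ j : ↥W, (fun x : ℤ → A => x (j : ℤ)) ⁻¹' {p j} := by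
      ext x; simp [hcyldef, Set.mem_iInter]
    rw [this]
    exact MeasurableSet.iInter fun j => measurable_pi_apply _ (measurableSet_singleton _)
  have hEdecomp :
      ({x : ℤ → A | ∀ s : ↥S₀, x (s : ℤ) = c₀ s} ∩
        (cellAut1 D f)^[n] ⁻¹' {x | ∀ s : ↥S₁, x (s : ℤ) = c₁ s}) =
      ⋃ p ∈ Finset.univ.filter Good, cyl p := by
    ext x
    simp only [Set.mem_inter_iff, Set.mem_setOf_eq, Set.mem_preimage, Set.mem_iUnion,
      Finset.mem_filter, Finset.mem_univ, true_and, exists_prop]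
    constructor
    · rintro ⟨h0, h1⟩
      refine ⟨fun j => x (j : ℤ), ⟨⟨fun s => h0 s, fun s => ?_⟩, fun j => rfl⟩⟩
      rw [← hlocW (fun j => x (j : ℤ)) x (fun j hj => rfl) s]
      exact h1 s
    · rintro ⟨p, ⟨⟨hp0, hp1⟩, hxp⟩⟩
      constructor
      · intro s
        rw [hxp ⟨(s : ℤ), hS₀W s s.2⟩]
        exact hp0 s
      · intro s
        rw [hlocW p x (fun j hj => hxp ⟨j, hj⟩) s]
        exact hp1 s
  rw [hEdecomp, measure_biUnion_finset ?disj (fun p _ => hmeas p)]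
  case disj =>
    intro p hp q hq hpq
    simp only [Function.onFun]
    rw [Set.disjoint_left]
    intro x hxp hxq
    exact hpq (funext fun j => (hxp j).symm.trans (hxq j))
  have hμcyl : ∀ p ∈ Finset.univ.filter Good,
      μ (cyl p) = ((Fintype.card A : ENNReal))⁻¹ ^ W.card := fun p _ => hber W p
  rw [Finset.sum_congr rfl hμcyl, Finset.sum_const, nsmul_eq_mul]
  -- counting the good patterns
  set Free : Finset ℤ := W \ (S₀ ∪ T) with hFree
  have hFreeW : ∀ j ∈ Free, j ∈ W := fun j hj => (Finset.mem_sdiff.mp hj).1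
  set bg : (↥Free → A) → (ℤ → A) := fun w j =>
    if h : j ∈ S₀ then c₀ ⟨j, h⟩
    else if h' : j ∈ Free then w ⟨j, h'⟩ else Classical.arbitrary A with hbg
  set sol : (↥Free → A) → (↥S₁ → A) :=
    fun w => (Equiv.ofBijective _ (hΨbij (bg w))).symm c₁ with hsol
  have hsolspec : ∀ w, Ψ (bg w) (sol w) = c₁ := by
    intro w
    exact (Equiv.ofBijective _ (hΨbij (bg w))).apply_symm_apply c₁
  have hrecon : ∀ (p : ↥W → A), Good p →
      ∀ j (hj : j ∈ W),
        patch (bg (fun t : ↥Free => p ⟨(t : ℤ), hFreeW t t.2⟩))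
          (fun s : ↥S₁ => p ⟨(s : ℤ) + (n : ℤ) * r, hTW s s.2⟩) j = p ⟨j, hj⟩ := by
    intro p hp j hj
    by_cases hjT : j - (n : ℤ) * r ∈ S₁
    · simp only [hpatch]
      rw [dif_pos hjT]
      have : ((⟨j - (n : ℤ) * r, hjT⟩ : ↥S₁) : ℤ) + (n : ℤ) * r = j := by ring
      exact congrArg p (Subtype.ext this)
    · rw [hpatchN (bg (fun t : ↥Free => p ⟨(t : ℤ), hFreeW t t.2⟩))
        (fun s : ↥S₁ => p ⟨(s : ℤ) + (n : ℤ) * r, hTW s s.2⟩) j hjT]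
      simp only [hbg]
      by_cases hjS₀ : j ∈ S₀
      · rw [dif_pos hjS₀]
        exact (hp.1 ⟨j, hjS₀⟩).symm
      · rw [dif_neg hjS₀]
        have hjF : j ∈ Free := by
          rw [hFree, Finset.mem_sdiff]
          refine ⟨hj, ?_⟩
          simp only [Finset.mem_union]
          push_neg
          exact ⟨hjS₀, fun h => hjT ((hTmem j).mp h)⟩
        rw [dif_pos hjF]
  have hΨGood : ∀ (p : ↥W → A), Good p →
      Ψ (bg (fun t : ↥Free => p ⟨(t : ℤ), hFreeW t t.2⟩))
        (fun s : ↥S₁ => p ⟨(s : ℤ) + (n : ℤ) * r, hTW s s.2⟩) = c₁ := by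
    intro p hp
    funext s
    simp only [hΨdef]
    rw [hlocW p _ (fun j hj => hrecon p hp j hj) s]
    exact hp.2 s
  have hGoodinv : ∀ w : ↥Free → A,
      Good (fun j : ↥W => patch (bg w) (sol w) (j : ℤ)) := by
    intro w
    constructor
    · intro s
      have hsT : (s : ℤ) - (n : ℤ) * r ∉ S₁ := by
        intro hc
        exact hT0 _ hc (s : ℤ) s.2 (by ring)
      show patch (bg w) (sol w) ((s : ℤ)) = c₀ s
      rw [hpatchN (bg w) (sol w) (s : ℤ) hsT]
      simp only [hbg]
      rw [dif_pos s.2]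
    · intro s
      rw [← hlocW (fun j : ↥W => patch (bg w) (sol w) (j : ℤ))
        (patch (bg w) (sol w)) (fun j hj => rfl) s]
      have := congrFun (hsolspec w) s
      simpa only [hΨdef] using this
  have hcard : (Finset.univ.filter Good).card = Fintype.card A ^ Free.card := by
    have e : {p : ↥W → A // Good p} ≃ (↥Free → A) :=
      { toFun := fun p t => p.1 ⟨(t : ℤ), hFreeW t t.2⟩
        invFun := fun w => ⟨fun j : ↥W => patch (bg w) (sol w) (j : ℤ), hGoodinv w⟩
        left_inv := by
          rintro ⟨p, hp⟩
          apply Subtype.ext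
          funext j
          have hu' : sol (fun t : ↥Free => p ⟨(t : ℤ), hFreeW t t.2⟩) =
              fun s : ↥S₁ => p ⟨(s : ℤ) + (n : ℤ) * r, hTW s s.2⟩ := by
            rw [hsol]
            rw [Equiv.symm_apply_eq]
            exact (hΨGood p hp).symm
          simp only []
          rw [hu']
          exact hrecon p hp (j : ℤ) j.2
        right_inv := by
          intro w
          funext t
          simp only []
          have h1 : (t : ℤ) - (n : ℤ) * r ∉ S₁ := by
            intro hc
            have hmemT : (t : ℤ) ∈ T := (hTmem _).mpr hc
            exact (Finset.mem_sdiff.mp t.2).2 (Finset.mem_union_right _ hmemT)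
          rw [hpatchN (bg w) (sol w) (t : ℤ) h1]
          simp only [hbg]
          have h2 : (t : ℤ) ∉ S₀ := fun hc =>
            (Finset.mem_sdiff.mp t.2).2 (Finset.mem_union_left _ hc)
          rw [dif_neg h2, dif_pos t.2] }
    calc (Finset.univ.filter Good).card
        = Fintype.card {p : ↥W → A // Good p} := (Fintype.card_subtype Good).symm
      _ = Fintype.card (↥Free → A) := Fintype.card_congr e
      _ = Fintype.card A ^ Free.card := by
          rw [Fintype.card_fun, Fintype.card_coe]
  rw [hber S₀ c₀, hber S₁ c₁, hcard]
  -- final arithmetic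
  have hsubW : S₀ ∪ T ⊆ W := by
    intro j hj
    rcases Finset.mem_union.mp hj with h | h
    · exact hS₀W j h
    · obtain ⟨s, hs, rfl⟩ := Finset.mem_image.mp h
      exact hTW s hs
  have hdisjST : Disjoint S₀ T := Finset.disjoint_left.mpr hTS₀
  have hTcard : T.card = S₁.card :=
    Finset.card_image_of_injective _ (add_left_injective _)
  have hFreecard : Free.card = W.card - (S₀.card + S₁.card) := by
    rw [hFree, Finset.card_sdiff_of_subset hsubW, Finset.card_union_of_disjoint hdisjST, hTcard]
  have hle : S₀.card + S₁.card ≤ W.card := by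
    calc S₀.card + S₁.card = (S₀ ∪ T).card := by
          rw [Finset.card_union_of_disjoint hdisjST, hTcard]
      _ ≤ W.card := Finset.card_le_card hsubW
  obtain ⟨a, ha⟩ : ∃ a, W.card = a + (S₀.card + S₁.card) :=
    ⟨W.card - (S₀.card + S₁.card), (Nat.sub_add_cancel hle).symm⟩
  rw [hFreecard, ha]
  have h1 : a + (S₀.card + S₁.card) - (S₀.card + S₁.card) = a := by omega
  rw [h1]
  have hm0 : (Fintype.card A : ENNReal) ≠ 0 := by
    simp [Fintype.card_ne_zero]
  have hmtop : (Fintype.card A : ENNReal) ≠ ⊤ := ENNReal.natCast_ne_top _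
  rw [pow_add, pow_add, ← mul_assoc]
  have hcancel : (↑(Fintype.card A ^ a) : ENNReal) *
      ((Fintype.card A : ENNReal))⁻¹ ^ a = 1 := by
    rw [Nat.cast_pow, ← mul_pow, ENNReal.mul_inv_cancel hm0 hmtop, one_pow]
  rw [hcancel, one_mul]
end
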